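/- arXiv:math/0407418 — 5 statements merged into one kernel-verified Lean document; each statement's English description precedes it below -/
import Mathlib

section
/- Let α, β, δ, γ be positive real numbers satisfying δ + β > α, α + β > δ, δ + α > β, and 2γ = α + β + δ. Then there exist rank-one orthogonal projections P, Q, R on ℂ² with αP + βQ + δR = γ·I₂, and moreover P, Q, R have no common nontrivial invariant subspace. -/
set_option maxHeartbeats 1000000

lemma aux_rank_one (M : Matrix (Fin 2) (Fin 2) ℂ) (h0 : M ≠ 0) (hdet : M.det = 0) :
    M.rank = 1 := by
  obtain ⟨v, hv, hMv⟩ := Matrix.exists_mulVec_eq_zero_iff.2 hdet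
  have hker : 0 < Module.finrank ℂ (LinearMap.ker M.mulVecLin) := by
    rw [Module.finrank_pos_iff]
    exact ⟨⟨⟨v, by simpa [Matrix.mulVecLin] using hMv⟩, 0, by simpa using hv⟩⟩
  have hrange : 0 < M.rank := by
    rw [Matrix.rank, Module.finrank_pos_iff]
    obtain ⟨i, j, hij⟩ : ∃ i j, M i j ≠ 0 := by
      by_contra h; push_neg at h; exact h0 (by ext i j; simpa using h i j)
    refine ⟨⟨⟨M.mulVec (Pi.single j 1), ⟨Pi.single j 1, rfl⟩⟩, 0, fun h => hij ?_⟩⟩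
    have h1 : M.mulVec (Pi.single j 1) = 0 := by
      have := congrArg Subtype.val h
      simpa using this
    have h2 := congrFun h1 i
    simpa [Matrix.mulVec_single] using h2
  have hrn := LinearMap.finrank_range_add_finrank_ker M.mulVecLin
  rw [Module.finrank_fin_fun] at hrn
  have : M.rank = Module.finrank ℂ (LinearMap.range M.mulVecLin) := rfl
  omega

theorem stmt_2 (α β δ γ : ℝ) (hα : 0 < α) (hβ : 0 < β) (hδ : 0 < δ) (hγ : 0 < γ)
    (h1 : δ + β > α) (h2 : α + β > δ) (h3 : δ + α > β) (hsum : 2 * γ = α + β + δ) :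
    ∃ P Q R : Matrix (Fin 2) (Fin 2) ℂ,
      P.IsHermitian ∧ P * P = P ∧ P.rank = 1 ∧
      Q.IsHermitian ∧ Q * Q = Q ∧ Q.rank = 1 ∧
      R.IsHermitian ∧ R * R = R ∧ R.rank = 1 ∧
      (α : ℂ) • P + (β : ℂ) • Q + (δ : ℂ) • R = (γ : ℂ) • (1 : Matrix (Fin 2) (Fin 2) ℂ) ∧
      (∀ W : Submodule ℂ (Fin 2 → ℂ),
        (∀ x ∈ W, P.mulVec x ∈ W) → (∀ x ∈ W, Q.mulVec x ∈ W) →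
        (∀ x ∈ W, R.mulVec x ∈ W) → W = ⊥ ∨ W = ⊤) := by
  obtain ⟨q, r, s, t, hq0, hq1, hr0, hr1, hs, ht0, hs2, ht2, h00, h11, hoff⟩ :
      ∃ q r s t : ℝ, 0 < q ∧ q < 1 ∧ 0 < r ∧ r < 1 ∧ 0 < s ∧ t ≠ 0 ∧
        s^2 = q*(1-q) ∧ t^2 = r*(1-r) ∧
        α + β*q + δ*r = γ ∧ β*(1-q) + δ*(1-r) = γ ∧ β*s + δ*t = 0 := by
    have hα' := hα.ne'
    have hβ' := hβ.ne'
    have hδ' := hδ.ne'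
    obtain ⟨m, hm_def⟩ : ∃ m:ℝ, m = (β + δ - α)/2 := ⟨_, rfl⟩
    obtain ⟨q, hq_def⟩ : ∃ x:ℝ, x = m*(δ-m)/(α*β) := ⟨_, rfl⟩
    obtain ⟨r, hr_def⟩ : ∃ x:ℝ, x = m*(β-m)/(α*δ) := ⟨_, rfl⟩
    have hm : 0 < m := by rw [hm_def]; linarith
    have hδm : 0 < δ - m := by rw [hm_def]; linarith
    have hβm : 0 < β - m := by rw [hm_def]; linarith
    have hq0 : 0 < q := by rw [hq_def]; positivity
    have hr0 : 0 < r := by rw [hr_def]; positivity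
    have hq1 : q < 1 := by
      rw [hq_def, div_lt_one (by positivity)]
      rw [hm_def]; nlinarith [mul_pos (show (0:ℝ) < α + β - δ by linarith) (show (0:ℝ) < α+β+δ by linarith)]
    have hr1 : r < 1 := by
      rw [hr_def, div_lt_one (by positivity)]
      rw [hm_def]; nlinarith [mul_pos (show (0:ℝ) < α + δ - β by linarith) (show (0:ℝ) < α+β+δ by linarith)]
    obtain ⟨s, hs_def⟩ : ∃ x:ℝ, x = Real.sqrt (q*(1-q)) := ⟨_, rfl⟩
    obtain ⟨t, ht_def⟩ : ∃ x:ℝ, x = -(β*s)/δ := ⟨_, rfl⟩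
    have hs : 0 < s := hs_def ▸ Real.sqrt_pos.2 (by nlinarith)
    have hs2 : s^2 = q*(1-q) := hs_def ▸ Real.sq_sqrt (by nlinarith)
    have hkey : β^2*(q*(1-q)) = δ^2*(r*(1-r)) := by
      rw [hq_def, hr_def, hm_def]; field_simp; ring
    have ht2 : t^2 = r*(1-r) := by
      have h5 : δ^2 * t^2 = δ^2 * (r*(1-r)) := by
        rw [ht_def]; field_simp; nlinarith [hs2, hkey]
      exact mul_left_cancel₀ (by positivity) h5
    have ht0 : t ≠ 0 := by
      rw [ht_def]
      have : 0 < β * s := by positivity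
      intro h
      rw [div_eq_zero_iff] at h
      rcases h with h | h
      · linarith
      · exact hδ' h
    have hbqdr : β*q + δ*r = (β+δ-α)/2 := by rw [hq_def, hr_def, hm_def]; field_simp; ring
    have h00 : α + β*q + δ*r = γ := by linear_combination hbqdr - hsum/2
    have h11 : β*(1-q) + δ*(1-r) = γ := by linear_combination -1*hbqdr - hsum/2
    have hoff : β*s + δ*t = 0 := by rw [ht_def]; field_simp; ring
    exact ⟨q, r, s, t, hq0, hq1, hr0, hr1, hs, ht0, hs2, ht2, h00, h11, hoff⟩
  have hsC : (s:ℂ) ≠ 0 := by exact_mod_cast hs.ne'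
  have htC : (t:ℂ) ≠ 0 := by exact_mod_cast ht0
  refine ⟨!![1,0;0,0], !![(q:ℂ),(s:ℂ);(s:ℂ),1-(q:ℂ)], !![(r:ℂ),(t:ℂ);(t:ℂ),1-(r:ℂ)],
    ?_, ?_, ?_, ?_, ?_, ?_, ?_, ?_, ?_, ?_, ?_⟩
  · ext i j; fin_cases i <;> fin_cases j <;> simp [Matrix.conjTranspose_apply]
  · ext i j; fin_cases i <;> fin_cases j <;>
      simp [Matrix.mul_apply, Fin.sum_univ_two]
  · refine aux_rank_one _ (fun h => ?_) ?_
    · have := congrFun (congrFun h 0) 0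
      simp at this
    · simp [Matrix.det_fin_two_of]
  · ext i j; fin_cases i <;> fin_cases j <;>
      simp [Matrix.conjTranspose_apply, Complex.conj_ofReal]
  · rw [Matrix.mul_fin_two]
    have e1 : (q:ℂ)*q + s*s = q := by norm_cast; nlinarith [hs2]
    have e4 : (s:ℂ)*s + (1-q)*(1-q) = 1-q := by
      have h5 : (s:ℂ)*s = q*(1-q) := by norm_cast; nlinarith [hs2]
      rw [h5]; ring
    rw [e1, e4]; congr 1 <;> ring
  · refine aux_rank_one _ (fun h => ?_) ?_
    · have := congrFun (congrFun h 0) 1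
      simp at this
      exact hsC (by exact_mod_cast this)
    · rw [Matrix.det_fin_two_of]
      push_cast
      have h5 : q*(1-q) - s*s = 0 := by nlinarith [hs2]
      exact_mod_cast h5
  · ext i j; fin_cases i <;> fin_cases j <;>
      simp [Matrix.conjTranspose_apply, Complex.conj_ofReal]
  · rw [Matrix.mul_fin_two]
    have e1 : (r:ℂ)*r + t*t = r := by norm_cast; nlinarith [ht2]
    have e4 : (t:ℂ)*t + (1-r)*(1-r) = 1-r := by
      have h5 : (t:ℂ)*t = r*(1-r) := by norm_cast; nlinarith [ht2]
      rw [h5]; ring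
    rw [e1, e4]; congr 1 <;> ring
  · refine aux_rank_one _ (fun h => ?_) ?_
    · have := congrFun (congrFun h 0) 1
      simp at this
      exact htC (by exact_mod_cast this)
    · rw [Matrix.det_fin_two_of]
      push_cast
      have h5 : r*(1-r) - t*t = 0 := by nlinarith [ht2]
      exact_mod_cast h5
  · ext i j
    fin_cases i <;> fin_cases j
    · simp only [Matrix.add_apply, Matrix.smul_apply, Matrix.one_apply, smul_eq_mul]
      norm_num
      exact_mod_cast h00
    · simp only [Matrix.add_apply, Matrix.smul_apply, Matrix.one_apply, smul_eq_mul]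
      norm_num
      exact_mod_cast hoff
    · simp only [Matrix.add_apply, Matrix.smul_apply, Matrix.one_apply, smul_eq_mul]
      norm_num
      exact_mod_cast hoff
    · simp only [Matrix.add_apply, Matrix.smul_apply, Matrix.one_apply, smul_eq_mul]
      norm_num
      exact_mod_cast h11
  · intro W hPW hQW hRW
    by_cases hW : W = ⊥
    · exact Or.inl hW
    right
    obtain ⟨x, hxW, hx⟩ := Submodule.exists_mem_ne_zero_of_ne_bot hW
    have key : (![1,0] : Fin 2 → ℂ) ∈ W ∧ (![0,1] : Fin 2 → ℂ) ∈ W := by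
      by_cases h0 : x 0 = 0
      · have h1x : x 1 ≠ 0 := by
          intro h; apply hx; funext i; fin_cases i <;> simp [h0, h]
        have he1 : (![0,1] : Fin 2 → ℂ) ∈ W := by
          have hmem : (x 1)⁻¹ • x ∈ W := W.smul_mem _ hxW
          have e : (x 1)⁻¹ • x = ![0,1] := by
            funext i; fin_cases i <;> simp [h0]
            exact inv_mul_cancel₀ h1x
          rwa [e] at hmem
        have hQ1 : (!![(q:ℂ),(s:ℂ);(s:ℂ),1-(q:ℂ)]).mulVec ![0,1] = ![(s:ℂ), 1-q] := by
          funext i; fin_cases i <;> simp [Matrix.mulVec, dotProduct, Fin.sum_univ_two]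
        have hv1 : (![(s:ℂ), 1-q] : Fin 2 → ℂ) ∈ W := hQ1 ▸ hQW _ he1
        have hv2 : (![(s:ℂ), 1-q] : Fin 2 → ℂ) - (1-(q:ℂ)) • ![0,1] ∈ W :=
          W.sub_mem hv1 (W.smul_mem _ he1)
        have e2 : (![(s:ℂ), 1-q] : Fin 2 → ℂ) - (1-(q:ℂ)) • ![0,1] = (s:ℂ) • ![1,0] := by
          funext i; fin_cases i <;> simp
        rw [e2] at hv2
        have he0 : (![1,0] : Fin 2 → ℂ) ∈ W := by
          have := W.smul_mem (s:ℂ)⁻¹ hv2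
          rwa [smul_smul, inv_mul_cancel₀ hsC, one_smul] at this
        exact ⟨he0, he1⟩
      · have he0 : (![1,0] : Fin 2 → ℂ) ∈ W := by
          have hPx : (!![(1:ℂ),0;0,0]).mulVec x = (x 0) • ![1,0] := by
            funext i; fin_cases i <;> simp [Matrix.mulVec, dotProduct, Fin.sum_univ_two]
          have hmem : (x 0) • (![1,0] : Fin 2 → ℂ) ∈ W := hPx ▸ hPW _ hxW
          have := W.smul_mem (x 0)⁻¹ hmem
          rwa [smul_smul, inv_mul_cancel₀ h0, one_smul] at this
        have hQ0 : (!![(q:ℂ),(s:ℂ);(s:ℂ),1-(q:ℂ)]).mulVec ![1,0] = ![(q:ℂ), (s:ℂ)] := by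
          funext i; fin_cases i <;> simp [Matrix.mulVec, dotProduct, Fin.sum_univ_two]
        have hv1 : (![(q:ℂ), (s:ℂ)] : Fin 2 → ℂ) ∈ W := hQ0 ▸ hQW _ he0
        have hv2 : (![(q:ℂ), (s:ℂ)] : Fin 2 → ℂ) - (q:ℂ) • ![1,0] ∈ W :=
          W.sub_mem hv1 (W.smul_mem _ he0)
        have e2 : (![(q:ℂ), (s:ℂ)] : Fin 2 → ℂ) - (q:ℂ) • ![1,0] = (s:ℂ) • ![0,1] := by
          funext i; fin_cases i <;> simp
        rw [e2] at hv2
        have he1 : (![0,1] : Fin 2 → ℂ) ∈ W := by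
          have := W.smul_mem (s:ℂ)⁻¹ hv2
          rwa [smul_smul, inv_mul_cancel₀ hsC, one_smul] at this
        exact ⟨he0, he1⟩
    rw [Submodule.eq_top_iff']
    intro v
    have hv : v = v 0 • ![1,0] + v 1 • ![0,1] := by
      funext i; fin_cases i <;> simp
    rw [hv]
    exact W.add_mem (W.smul_mem _ key.1) (W.smul_mem _ key.2)
end

section
/- Suppose rank-one orthogonal projections P, Q, R on ℂ² satisfy αP + βQ + δR = γ·I₂ for positive reals α, β, δ, γ and have no common nontrivial invariant subspace. Then the strict triangle inequalities δ + β > α, α + β > δ, δ + α > β hold. -/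
/-!
Let `v` be a unit vector with `P v = v` and `w` one with `P w = 0`. Evaluating the quadratic forms
of both sides of `αP + βQ + δR = γ` at `v` gives `α + β⟨Qv, v⟩ + δ⟨Rv, v⟩ = γ`, so `α ≤ γ`, and
at `w` it gives `β⟨Qw, w⟩ + δ⟨Rw, w⟩ = γ`, so `γ ≤ β + δ`. Since `Q` and `R` are positive
semidefinite, equality in the first case forces `Qv = Rv = 0`, and equality in the second forces
`Qw = Rw = w`; either way a line is invariant under `P`, `Q`, `R`. Hence `α < γ < β + δ`, and the
other two inequalities follow by symmetry.
-/

open Matrix ComplexOrder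

variable {n 𝕜 : Type*} [Fintype n] [RCLike 𝕜]

lemma Matrix.IsHermitian.posSemidef_of_isIdempotentElem {A : Matrix n n 𝕜} (hA : A.IsHermitian)
    (hA2 : IsIdempotentElem A) : A.PosSemidef := by
  have hA' : A = Aᴴ * A := by rw [hA.eq, hA2.eq]
  rw [hA']
  exact posSemidef_conjTranspose_mul_self A

lemma Matrix.PosSemidef.mulVec_eq_zero_of_eigenvector_of_nonpos {A B : Matrix n n 𝕜}
    (hA : A.PosSemidef) (hB : B.PosSemidef) {β δ c : ℝ} (hβ : 0 < β) (hδ : 0 < δ) (hc : c ≤ 0)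
    {x : n → 𝕜} (hx : ((β : 𝕜) • A + (δ : 𝕜) • B) *ᵥ x = (c : 𝕜) • x) :
    A *ᵥ x = 0 ∧ B *ᵥ x = 0 := by
  have hsum : (β : 𝕜) * (star x ⬝ᵥ A *ᵥ x) + (δ : 𝕜) * (star x ⬝ᵥ B *ᵥ x)
      = (c : 𝕜) * (star x ⬝ᵥ x) := by
    simpa only [add_mulVec, smul_mulVec, dotProduct_add, dotProduct_smul, smul_eq_mul]
      using congrArg (star x ⬝ᵥ ·) hx
  have ha := mul_nonneg (RCLike.ofReal_nonneg.mpr hβ.le) (hA.dotProduct_mulVec_nonneg x)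
  have hb := mul_nonneg (RCLike.ofReal_nonneg.mpr hδ.le) (hB.dotProduct_mulVec_nonneg x)
  have hnonpos : (c : 𝕜) * (star x ⬝ᵥ x) ≤ 0 :=
    mul_nonpos_of_nonpos_of_nonneg (RCLike.ofReal_nonpos.mpr hc) (dotProduct_star_self_nonneg x)
  obtain ⟨ha0, hb0⟩ :=
    (add_eq_zero_iff_of_nonneg ha hb).mp (le_antisymm (hsum ▸ hnonpos) (add_nonneg ha hb))
  rw [← hA.dotProduct_mulVec_zero_iff, ← hB.dotProduct_mulVec_zero_iff]
  exact ⟨(mul_eq_zero.mp ha0).resolve_left (RCLike.ofReal_ne_zero.mpr hβ.ne'),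
    (mul_eq_zero.mp hb0).resolve_left (RCLike.ofReal_ne_zero.mpr hδ.ne')⟩

lemma Matrix.forall_mulVec_mem_span_singleton {R : Type*} [CommSemiring R] {M : Matrix n n R}
    {v : n → R} (hM : M *ᵥ v ∈ R ∙ v) : ∀ x ∈ R ∙ v, M *ᵥ x ∈ R ∙ v := by
  intro x hx
  obtain ⟨c, rfl⟩ := Submodule.mem_span_singleton.mp hx
  rw [mulVec_smul]
  exact Submodule.smul_mem _ _ hM

lemma Matrix.exists_mulVec_eq_self_of_isIdempotentElem {R : Type*} [Semiring R] [DecidableEq n]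
    {P : Matrix n n R} (hP : IsIdempotentElem P) (h0 : P ≠ 0) : ∃ v ≠ 0, P *ᵥ v = v := by
  obtain ⟨j, hj⟩ : ∃ j, P *ᵥ Pi.single j 1 ≠ 0 := by
    by_contra! h
    exact h0 (ext_of_mulVec_single fun j => by rw [zero_mulVec]; exact h j)
  exact ⟨_, hj, by rw [mulVec_mulVec, hP.eq]⟩

lemma Submodule.span_singleton_ne_top_of_one_lt_finrank {K V : Type*} [DivisionRing K]
    [AddCommGroup V] [Module K V] (h : 1 < Module.finrank K V) (v : V) : K ∙ v ≠ ⊤ := by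
  intro htop
  have hle := finrank_span_le_card (R := K) ({v} : Set V)
  rw [htop, finrank_top] at hle
  simp only [Set.toFinset_singleton, Finset.card_singleton] at hle
  omega

lemma eq_zero_of_common_eigenvector {P Q R : Matrix n n 𝕜} (hn : 1 < Fintype.card n)
    (hirr : ∀ W : Submodule 𝕜 (n → 𝕜),
      (∀ x ∈ W, P *ᵥ x ∈ W) → (∀ x ∈ W, Q *ᵥ x ∈ W) → (∀ x ∈ W, R *ᵥ x ∈ W) → W = ⊥ ∨ W = ⊤)
    {v : n → 𝕜} (hPv : P *ᵥ v ∈ 𝕜 ∙ v) (hQv : Q *ᵥ v ∈ 𝕜 ∙ v) (hRv : R *ᵥ v ∈ 𝕜 ∙ v) :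
    v = 0 := by
  rcases hirr _ (forall_mulVec_mem_span_singleton hPv) (forall_mulVec_mem_span_singleton hQv)
    (forall_mulVec_mem_span_singleton hRv) with h | h
  · exact Submodule.span_singleton_eq_bot.mp h
  · exact absurd h (Submodule.span_singleton_ne_top_of_one_lt_finrank (by simpa using hn) v)

theorem lt_add_of_irreducible {P Q R : Matrix (Fin 2) (Fin 2) 𝕜}
    (hP2 : IsIdempotentElem P) (hPr : P.rank = 1)
    (hQ : Q.IsHermitian) (hQ2 : IsIdempotentElem Q)
    (hR : R.IsHermitian) (hR2 : IsIdempotentElem R)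
    {α β δ γ : ℝ} (hβ : 0 < β) (hδ : 0 < δ)
    (heq : (α : 𝕜) • P + (β : 𝕜) • Q + (δ : 𝕜) • R = (γ : 𝕜) • 1)
    (hirr : ∀ W : Submodule 𝕜 (Fin 2 → 𝕜),
      (∀ x ∈ W, P *ᵥ x ∈ W) → (∀ x ∈ W, Q *ᵥ x ∈ W) → (∀ x ∈ W, R *ᵥ x ∈ W) → W = ⊥ ∨ W = ⊤) :
    α < β + δ := by
  have hα_lt : α < γ := by
    obtain ⟨v, hv, hPv⟩ := exists_mulVec_eq_self_of_isIdempotentElem hP2 (by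
      rintro rfl
      simp at hPr)
    by_contra! h
    have hv' : ((β : 𝕜) • Q + (δ : 𝕜) • R) *ᵥ v = ((γ - α : ℝ) : 𝕜) • v := by
      rw [show (β : 𝕜) • Q + (δ : 𝕜) • R = (γ : 𝕜) • 1 - (α : 𝕜) • P by rw [← heq]; abel,
        sub_mulVec, smul_mulVec, smul_mulVec, one_mulVec, hPv, RCLike.ofReal_sub, sub_smul]
    have hQp := hQ.posSemidef_of_isIdempotentElem hQ2
    have hRp := hR.posSemidef_of_isIdempotentElem hR2
    obtain ⟨hQv, hRv⟩ := hQp.mulVec_eq_zero_of_eigenvector_of_nonpos hRp hβ hδ (by linarith) hv'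
    exact hv (eq_zero_of_common_eigenvector (by simp) hirr
      (by simp [hPv, Submodule.mem_span_singleton_self]) (by simp [hQv]) (by simp [hRv]))
  have hγ_lt : γ < β + δ := by
    have hdet : P.det = 0 := by
      by_contra hd
      have := rank_of_isUnit P ((isUnit_iff_isUnit_det P).mpr (isUnit_iff_ne_zero.mpr hd))
      simp [hPr] at this
    obtain ⟨w, hw, hPw⟩ := exists_mulVec_eq_zero_iff.mpr hdet
    by_contra! h
    have hw' : ((β : 𝕜) • (1 - Q) + (δ : 𝕜) • (1 - R)) *ᵥ w = ((β + δ - γ : ℝ) : 𝕜) • w := by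
      rw [show (β : 𝕜) • (1 - Q) + (δ : 𝕜) • (1 - R) = ((β + δ - γ : ℝ) : 𝕜) • 1 + (α : 𝕜) • P
          by push_cast; linear_combination (norm := module) -heq,
        add_mulVec, smul_mulVec, smul_mulVec, one_mulVec, hPw, smul_zero, add_zero]
    have hQc := (isHermitian_one.sub hQ).posSemidef_of_isIdempotentElem hQ2.one_sub
    have hRc := (isHermitian_one.sub hR).posSemidef_of_isIdempotentElem hR2.one_sub
    obtain ⟨hQw, hRw⟩ := hQc.mulVec_eq_zero_of_eigenvector_of_nonpos hRc hβ hδ (by linarith) hw'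
    rw [sub_mulVec, one_mulVec, sub_eq_zero] at hQw hRw
    exact hw (eq_zero_of_common_eigenvector (by simp) hirr (by simp [hPw])
      (by simp [← hQw, Submodule.mem_span_singleton_self])
      (by simp [← hRw, Submodule.mem_span_singleton_self]))
  linarith

theorem stmt_3_general (P Q R : Matrix (Fin 2) (Fin 2) ℂ)
    (hP : P.IsHermitian) (hP2 : P * P = P) (hPr : P.rank = 1)
    (hQ : Q.IsHermitian) (hQ2 : Q * Q = Q) (hQr : Q.rank = 1)
    (hR : R.IsHermitian) (hR2 : R * R = R) (hRr : R.rank = 1)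
    (α β δ γ : ℝ) (hα : 0 < α) (hβ : 0 < β) (hδ : 0 < δ)
    (heq : (α : ℂ) • P + (β : ℂ) • Q + (δ : ℂ) • R = (γ : ℂ) • (1 : Matrix (Fin 2) (Fin 2) ℂ))
    (hirr : ∀ W : Submodule ℂ (Fin 2 → ℂ),
      (∀ x ∈ W, P.mulVec x ∈ W) → (∀ x ∈ W, Q.mulVec x ∈ W) →
      (∀ x ∈ W, R.mulVec x ∈ W) → W = ⊥ ∨ W = ⊤) :
    δ + β > α ∧ α + β > δ ∧ δ + α > β := by
  -- match the casts of `lt_add_of_irreducible` syntactically, so that `rw [← heq]` works below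
  rw [← RCLike.ofReal_eq_complex_ofReal] at heq
  have hα_lt : α < β + δ := lt_add_of_irreducible hP2 hPr hQ hQ2 hR hR2 hβ hδ heq hirr
  have hβ_lt : β < α + δ := lt_add_of_irreducible hQ2 hQr hP hP2 hR hR2 hα hδ
    (by rw [← heq]; abel) fun W hWQ hWP hWR => hirr W hWP hWQ hWR
  have hδ_lt : δ < β + α := lt_add_of_irreducible hR2 hRr hQ hQ2 hP hP2 hβ hα
    (by rw [← heq]; abel) fun W hWR hWQ hWP => hirr W hWP hWQ hWR
  exact ⟨by linarith, by linarith, by linarith⟩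

theorem stmt_3 (P Q R : Matrix (Fin 2) (Fin 2) ℂ)
    (hP : P.IsHermitian) (hP2 : P * P = P) (hPr : P.rank = 1)
    (hQ : Q.IsHermitian) (hQ2 : Q * Q = Q) (hQr : Q.rank = 1)
    (hR : R.IsHermitian) (hR2 : R * R = R) (hRr : R.rank = 1)
    (α β δ γ : ℝ) (hα : 0 < α) (hβ : 0 < β) (hδ : 0 < δ) (hγ : 0 < γ)
    (heq : (α : ℂ) • P + (β : ℂ) • Q + (δ : ℂ) • R = (γ : ℂ) • (1 : Matrix (Fin 2) (Fin 2) ℂ))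
    (hirr : ∀ W : Submodule ℂ (Fin 2 → ℂ),
      (∀ x ∈ W, P.mulVec x ∈ W) → (∀ x ∈ W, Q.mulVec x ∈ W) →
      (∀ x ∈ W, R.mulVec x ∈ W) → W = ⊥ ∨ W = ⊤) :
    δ + β > α ∧ α + β > δ ∧ δ + α > β :=
  stmt_3_general P Q R hP hP2 hPr hQ hQ2 hQr hR hR2 hRr α β δ γ hα hβ hδ heq hirr
end

section
/- Let α, β, δ, γ > 0 satisfy the triangle conditions δ + β > α, α + β > δ, δ + α > β and 2γ = α + β + δ. If (P, Q, R) and (P', Q', R') are two triples of rank-one orthogonal projections on ℂ² satisfying αP + βQ + δR = γI₂ = αP' + βQ' + δR', each with no common nontrivial invariant subspace, then there is a unitary 2×2 matrix U with UPU* = P', UQU* = Q', URU* = R'. -/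
/-!
A unitary change of basis takes `P` to `diag(1, 0)`; a further diagonal phase then takes `Q` to
`[[t, s], [s, 1 - t]]` with `s = √(t(1 - t)) ≥ 0`, where `t ∈ [0, 1]` is the only remaining invariant
of the pair. The relation `δR = γ - αP - βQ` forces `det (γ - αP - βQ) = 0` because `R` has rank one,
and in this normal form that determinant is `(γ - α)(γ - β) - αβt`. So `t`, and with it `R`, is
determined by `α, β, γ, δ`: both triples have the same normal form.
-/

open Matrix Complex ComplexConjugate Unitary

local notation "M₂" => Matrix (Fin 2) (Fin 2) ℂ

theorem Matrix.mul_self_fin_two {R : Type*} [CommRing R] (A : Matrix (Fin 2) (Fin 2) R) :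
    A * A = A.trace • A - A.det • 1 := by
  ext i j
  fin_cases i <;> fin_cases j <;> simp [mul_apply, trace_fin_two, det_fin_two] <;> ring

theorem Matrix.det_eq_zero_of_rank_lt {R m : Type*} [CommRing R] [IsDomain R] [Fintype m]
    [DecidableEq m] {A : Matrix m m R} (h : A.rank < Fintype.card m) : A.det = 0 := by
  by_contra hA
  exact h.ne (rank_of_det_ne_zero hA)

theorem Matrix.trace_eq_one_of_mul_self_of_rank_eq_one {K : Type*} [Field K]
    {P : Matrix (Fin 2) (Fin 2) K} (hP2 : P * P = P) (hPr : P.rank = 1) : P.trace = 1 := by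
  have hP0 : P ≠ 0 := by
    rintro rfl
    simp at hPr
  have hCH := mul_self_fin_two P
  rw [hP2, det_eq_zero_of_rank_lt (by simp [hPr]), zero_smul, sub_zero] at hCH
  have : (P.trace - 1) • P = 0 := by rw [sub_smul, one_smul, ← hCH, sub_self]
  exact sub_eq_zero.mp ((smul_eq_zero.mp this).resolve_right hP0)

section conjStarAlgAut

variable {S R : Type*} [Semiring R] [StarMul R] [SMul S R] [IsScalarTower S R R]
  [SMulCommClass S R R]

theorem Unitary.conjStarAlgAut_star_conjStarAlgAut_apply (u : unitary R) (x : R) :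
    conjStarAlgAut S R (star u) (conjStarAlgAut S R u x) = x := by
  rw [← conjStarAlgAut_symm, StarAlgEquiv.symm_apply_apply]

theorem Unitary.conjStarAlgAut_star_mul_eq_of_eq {u u' : unitary R} {x x' y : R}
    (h : conjStarAlgAut S R u x = y) (h' : conjStarAlgAut S R u' x' = y) :
    conjStarAlgAut S R (star u' * u) x = x' := by
  rw [conjStarAlgAut_mul_apply, h, ← h', conjStarAlgAut_star_conjStarAlgAut_apply]

end conjStarAlgAut

section matrixConjStarAlgAut

variable {n R : Type*} [Fintype n] [DecidableEq n] [CommRing R] [StarRing R]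
  (u : unitary (Matrix n n R)) (A : Matrix n n R)

theorem Matrix.det_conjStarAlgAut : (conjStarAlgAut R _ u A).det = A.det := by
  rw [conjStarAlgAut_apply, det_mul, det_mul, mul_right_comm, ← det_mul,
    mul_star_self_of_mem u.2, det_one, one_mul]

theorem Matrix.trace_conjStarAlgAut : (conjStarAlgAut R _ u A).trace = A.trace := by
  rw [conjStarAlgAut_apply, trace_mul_cycle, star_mul_self_of_mem u.2, one_mul]

theorem Matrix.IsHermitian.conjStarAlgAut {A : Matrix n n R} (hA : A.IsHermitian) :
    (conjStarAlgAut R _ u A).IsHermitian :=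
  IsSelfAdjoint.map hA _

end matrixConjStarAlgAut

theorem Complex.mul_conj_eq_one_of_norm_eq_one {ω : ℂ} (hω : ‖ω‖ = 1) : ω * conj ω = 1 := by
  simp [mul_conj', hω]

/-- For `0 ≤ a ≤ 1` and `‖ω‖ = 1`, the orthogonal projection onto the line spanned by the unit
vector `(√a ω, √(1 - a))`. -/
noncomputable def projMat (a : ℝ) (ω : ℂ) : M₂ :=
  !![a, √(a * (1 - a)) * ω; √(a * (1 - a)) * conj ω, 1 - a]

/-- A unitary with first column `(√a ω, √(1 - a))`, so that it carries `diag(1, 0)` to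
`projMat a ω`. -/
noncomputable def rotMat (a : ℝ) (ω : ℂ) : M₂ :=
  !![√a * ω, -√(1 - a); √(1 - a), √a * conj ω]

def phaseMat (ω : ℂ) : M₂ :=
  !![1, 0; 0, ω]

theorem exists_eq_projMat {P : M₂} (hH : P.IsHermitian) (htr : P.trace = 1) (hdet : P.det = 0) :
    ∃ a ∈ Set.Icc (0 : ℝ) 1, ∃ ω : ℂ, ‖ω‖ = 1 ∧ P = projMat a ω := by
  set a := (P 0 0).re
  set ω := exp (arg (P 0 1) * I)
  have h00 : P 0 0 = a := (conj_eq_iff_re.mp (hH.apply 0 0)).symm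
  have h10 : P 1 0 = conj (P 0 1) := (hH.apply 1 0).symm
  have h11 : P 1 1 = 1 - a := by
    rw [trace_fin_two, h00] at htr
    linear_combination htr
  have hnorm : ‖P 0 1‖ ^ 2 = a * (1 - a) := by
    rw [det_fin_two, h00, h10, h11, mul_conj'] at hdet
    exact_mod_cast (sub_eq_zero.mp hdet).symm
  have ha : a ∈ Set.Icc (0 : ℝ) 1 := by
    constructor <;> nlinarith [sq_nonneg ‖P 0 1‖]
  have h01 : P 0 1 = √(a * (1 - a)) * ω := by
    rw [← hnorm, Real.sqrt_sq (norm_nonneg _), norm_mul_exp_arg_mul_I]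
  refine ⟨a, ha, ω, norm_exp_ofReal_mul_I _, ?_⟩
  rw [eta_fin_two P, h00, h10, h11, h01, projMat, map_mul, conj_ofReal]

theorem rotMat_mem_unitary {a : ℝ} (ha : a ∈ Set.Icc (0 : ℝ) 1) {ω : ℂ} (hω : ‖ω‖ = 1) :
    rotMat a ω ∈ unitary M₂ := by
  have hsq : (√a : ℂ) ^ 2 + (√(1 - a) : ℂ) ^ 2 = 1 := by
    rw [← ofReal_pow, ← ofReal_pow, Real.sq_sqrt ha.1, Real.sq_sqrt (sub_nonneg.mpr ha.2)]
    push_cast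
    ring
  rw [← unitaryGroup, mem_unitaryGroup_iff]
  ext i j
  fin_cases i <;> fin_cases j <;> simp [rotMat, mul_apply, one_apply] <;>
    first
    | ring1
    | linear_combination (√a : ℂ) ^ 2 * mul_conj_eq_one_of_norm_eq_one hω + hsq

theorem rotMat_mul_single_mul_star {a : ℝ} (ha : a ∈ Set.Icc (0 : ℝ) 1) {ω : ℂ}
    (hω : ‖ω‖ = 1) : rotMat a ω * !![1, 0; 0, 0] * star (rotMat a ω) = projMat a ω := by
  have hsa : (√a : ℂ) * √a = a := by exact_mod_cast Real.mul_self_sqrt ha.1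
  have hsb : (√(1 - a) : ℂ) * √(1 - a) = 1 - a := by
    exact_mod_cast Real.mul_self_sqrt (sub_nonneg.mpr ha.2)
  have hsab : (√(a * (1 - a)) : ℂ) = √a * √(1 - a) := by
    exact_mod_cast Real.sqrt_mul ha.1 (1 - a)
  ext i j
  fin_cases i <;> fin_cases j <;> simp [rotMat, projMat, mul_apply, hsab] <;>
    first
    | ring1
    | linear_combination (√a : ℂ) ^ 2 * mul_conj_eq_one_of_norm_eq_one hω + hsa
    | linear_combination hsb

theorem phaseMat_mem_unitary {ω : ℂ} (hω : ‖ω‖ = 1) : phaseMat ω ∈ unitary M₂ := by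
  rw [← unitaryGroup, mem_unitaryGroup_iff]
  ext i j
  fin_cases i <;> fin_cases j <;>
    simp [phaseMat, mul_apply, one_apply, mul_conj_eq_one_of_norm_eq_one hω]

theorem phaseMat_mul_single_mul_star (ω : ℂ) :
    phaseMat ω * !![1, 0; 0, 0] * star (phaseMat ω) = !![1, 0; 0, 0] := by
  ext i j
  fin_cases i <;> fin_cases j <;> simp [phaseMat, mul_apply]

theorem phaseMat_mul_projMat_mul_star {ω : ℂ} (hω : ‖ω‖ = 1) (a : ℝ) :
    phaseMat ω * projMat a ω * star (phaseMat ω) = projMat a 1 := by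
  have hω' := mul_conj_eq_one_of_norm_eq_one hω
  ext i j
  fin_cases i <;> fin_cases j <;> simp [phaseMat, projMat, mul_apply] <;>
    first
    | linear_combination (√(a * (1 - a)) : ℂ) * hω'
    | linear_combination (1 - a : ℂ) * hω'

theorem exists_conjStarAlgAut_eq_single_and_projMat {P Q : M₂}
    (hP : P.IsHermitian) (hPtr : P.trace = 1) (hPdet : P.det = 0)
    (hQ : Q.IsHermitian) (hQtr : Q.trace = 1) (hQdet : Q.det = 0) :
    ∃ u : unitary M₂, ∃ t ∈ Set.Icc (0 : ℝ) 1,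
      conjStarAlgAut ℂ M₂ u P = !![1, 0; 0, 0] ∧ conjStarAlgAut ℂ M₂ u Q = projMat t 1 := by
  obtain ⟨a, ha, ω, hω, rfl⟩ := exists_eq_projMat hP hPtr hPdet
  let v : unitary M₂ := ⟨rotMat a ω, rotMat_mem_unitary ha hω⟩
  obtain ⟨t, ht, θ, hθ, hvQ⟩ := exists_eq_projMat (P := conjStarAlgAut ℂ M₂ (star v) Q)
    (hQ.conjStarAlgAut _) (by rw [trace_conjStarAlgAut, hQtr]) (by rw [det_conjStarAlgAut, hQdet])
  let d : unitary M₂ := ⟨phaseMat θ, phaseMat_mem_unitary hθ⟩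
  refine ⟨d * star v, t, ht, ?_, ?_⟩
  · rw [conjStarAlgAut_mul_apply, ← rotMat_mul_single_mul_star ha hω]
    exact (congrArg _ (conjStarAlgAut_star_conjStarAlgAut_apply v _)).trans
      (phaseMat_mul_single_mul_star θ)
  · rw [conjStarAlgAut_mul_apply, hvQ]
    exact phaseMat_mul_projMat_mul_star hθ t

theorem det_smul_one_sub_smul_single_sub_smul_projMat (α β γ : ℝ) {t : ℝ}
    (ht : t ∈ Set.Icc (0 : ℝ) 1) :
    ((γ : ℂ) • 1 - (α : ℂ) • !![1, 0; 0, 0] - (β : ℂ) • projMat t 1).det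
      = (((γ - α) * (γ - β) - α * β * t : ℝ) : ℂ) := by
  have hs : (√(t * (1 - t)) : ℂ) * √(t * (1 - t)) = t * (1 - t) := by
    exact_mod_cast Real.mul_self_sqrt (mul_nonneg ht.1 (sub_nonneg.mpr ht.2))
  rw [det_fin_two]
  simp [projMat]
  linear_combination (-(β : ℂ) ^ 2) * hs

theorem exists_conjStarAlgAut_eq_normalForm {α β δ γ : ℝ} (hα : α ≠ 0) (hβ : β ≠ 0) (hδ : δ ≠ 0)
    {P Q R : M₂} (hP : P.IsHermitian) (hPtr : P.trace = 1) (hPdet : P.det = 0)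
    (hQ : Q.IsHermitian) (hQtr : Q.trace = 1) (hQdet : Q.det = 0) (hR : R.det = 0)
    (heq : (α : ℂ) • P + (β : ℂ) • Q + (δ : ℂ) • R = (γ : ℂ) • 1) :
    ∃ u : unitary M₂,
      conjStarAlgAut ℂ M₂ u P = !![1, 0; 0, 0] ∧
      conjStarAlgAut ℂ M₂ u Q = projMat ((γ - α) * (γ - β) / (α * β)) 1 ∧
      conjStarAlgAut ℂ M₂ u R = (δ : ℂ)⁻¹ • ((γ : ℂ) • 1 - (α : ℂ) • !![1, 0; 0, 0] -
        (β : ℂ) • projMat ((γ - α) * (γ - β) / (α * β)) 1) := by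
  obtain ⟨u, t, ht, huP, huQ⟩ :=
    exists_conjStarAlgAut_eq_single_and_projMat hP hPtr hPdet hQ hQtr hQdet
  have huR : conjStarAlgAut ℂ M₂ u R =
      (δ : ℂ)⁻¹ • ((γ : ℂ) • 1 - (α : ℂ) • !![1, 0; 0, 0] - (β : ℂ) • projMat t 1) := by
    have h := congrArg (conjStarAlgAut ℂ M₂ u) heq
    simp only [map_add, map_smul, map_one, huP, huQ] at h
    rw [eq_inv_smul_iff₀ (ofReal_ne_zero.mpr hδ), ← h]
    abel
  have hdet := det_conjStarAlgAut u R
  rw [hR, huR, det_smul, det_smul_one_sub_smul_single_sub_smul_projMat α β γ ht] at hdet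
  have ht_eq : t = (γ - α) * (γ - β) / (α * β) := by
    have : (γ - α) * (γ - β) - α * β * t = 0 := by
      exact_mod_cast (mul_eq_zero.mp hdet).resolve_left (by simp [hδ])
    field_simp
    linarith
  exact ⟨u, huP, ht_eq ▸ huQ, ht_eq ▸ huR⟩

theorem stmt_4_general (α β δ γ : ℝ) (hα : 0 < α) (hβ : 0 < β) (hδ : 0 < δ)
    (P Q R P' Q' R' : Matrix (Fin 2) (Fin 2) ℂ)
    (hP : P.IsHermitian) (hP2 : P * P = P) (hPr : P.rank = 1)
    (hQ : Q.IsHermitian) (hQ2 : Q * Q = Q) (hQr : Q.rank = 1)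
    (hRr : R.rank = 1)
    (hP' : P'.IsHermitian) (hP'2 : P' * P' = P') (hP'r : P'.rank = 1)
    (hQ' : Q'.IsHermitian) (hQ'2 : Q' * Q' = Q') (hQ'r : Q'.rank = 1)
    (hR'r : R'.rank = 1)
    (heq : (α : ℂ) • P + (β : ℂ) • Q + (δ : ℂ) • R = (γ : ℂ) • (1 : Matrix (Fin 2) (Fin 2) ℂ))
    (heq' : (α : ℂ) • P' + (β : ℂ) • Q' + (δ : ℂ) • R' = (γ : ℂ) • (1 : Matrix (Fin 2) (Fin 2) ℂ)) :
    ∃ U ∈ Matrix.unitaryGroup (Fin 2) ℂ,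
      U * P * star U = P' ∧ U * Q * star U = Q' ∧ U * R * star U = R' := by
  have hdet {A : M₂} (hA : A.rank = 1) : A.det = 0 := det_eq_zero_of_rank_lt (by simp [hA])
  obtain ⟨u, huP, huQ, huR⟩ := exists_conjStarAlgAut_eq_normalForm hα.ne' hβ.ne' hδ.ne'
    hP (trace_eq_one_of_mul_self_of_rank_eq_one hP2 hPr) (hdet hPr)
    hQ (trace_eq_one_of_mul_self_of_rank_eq_one hQ2 hQr) (hdet hQr) (hdet hRr) heq
  obtain ⟨u', hu'P, hu'Q, hu'R⟩ := exists_conjStarAlgAut_eq_normalForm hα.ne' hβ.ne' hδ.ne'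
    hP' (trace_eq_one_of_mul_self_of_rank_eq_one hP'2 hP'r) (hdet hP'r)
    hQ' (trace_eq_one_of_mul_self_of_rank_eq_one hQ'2 hQ'r) (hdet hQ'r) (hdet hR'r) heq'
  exact ⟨star u' * u, (star u' * u).2, conjStarAlgAut_star_mul_eq_of_eq huP hu'P,
    conjStarAlgAut_star_mul_eq_of_eq huQ hu'Q, conjStarAlgAut_star_mul_eq_of_eq huR hu'R⟩

theorem stmt_4 (α β δ γ : ℝ) (hα : 0 < α) (hβ : 0 < β) (hδ : 0 < δ) (hγ : 0 < γ)
    (h1 : δ + β > α) (h2 : α + β > δ) (h3 : δ + α > β) (hsum : 2 * γ = α + β + δ)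
    (P Q R P' Q' R' : Matrix (Fin 2) (Fin 2) ℂ)
    (hP : P.IsHermitian) (hP2 : P * P = P) (hPr : P.rank = 1)
    (hQ : Q.IsHermitian) (hQ2 : Q * Q = Q) (hQr : Q.rank = 1)
    (hR : R.IsHermitian) (hR2 : R * R = R) (hRr : R.rank = 1)
    (hP' : P'.IsHermitian) (hP'2 : P' * P' = P') (hP'r : P'.rank = 1)
    (hQ' : Q'.IsHermitian) (hQ'2 : Q' * Q' = Q') (hQ'r : Q'.rank = 1)
    (hR' : R'.IsHermitian) (hR'2 : R' * R' = R') (hR'r : R'.rank = 1)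
    (heq : (α : ℂ) • P + (β : ℂ) • Q + (δ : ℂ) • R = (γ : ℂ) • (1 : Matrix (Fin 2) (Fin 2) ℂ))
    (heq' : (α : ℂ) • P' + (β : ℂ) • Q' + (δ : ℂ) • R' = (γ : ℂ) • (1 : Matrix (Fin 2) (Fin 2) ℂ))
    (hirr : ∀ W : Submodule ℂ (Fin 2 → ℂ),
      (∀ x ∈ W, P.mulVec x ∈ W) → (∀ x ∈ W, Q.mulVec x ∈ W) →
      (∀ x ∈ W, R.mulVec x ∈ W) → W = ⊥ ∨ W = ⊤)
    (hirr' : ∀ W : Submodule ℂ (Fin 2 → ℂ),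
      (∀ x ∈ W, P'.mulVec x ∈ W) → (∀ x ∈ W, Q'.mulVec x ∈ W) →
      (∀ x ∈ W, R'.mulVec x ∈ W) → W = ⊥ ∨ W = ⊤) :
    ∃ U ∈ Matrix.unitaryGroup (Fin 2) ℂ,
      U * P * star U = P' ∧ U * Q * star U = Q' ∧ U * R * star U = R' :=
  stmt_4_general α β δ γ hα hβ hδ P Q R P' Q' R' hP hP2 hPr hQ hQ2 hQr hRr hP' hP'2 hP'r hQ' hQ'2
    hQ'r hR'r heq heq'
end

section
/- Let c be the Coxeter transformation of a Dynkin tree G (for concreteness, E₆ as described), defined as the composition of all reflections at even vertices followed by all reflections at odd vertices. Then 1 is not an eigenvalue of c; equivalently, c − id is invertible on ℝ^{G_v}. -/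
/-- Adjacency of the E₆ tree: edges {g₁,g₂}, {g₂,g₀}, {g₀,g₄}, {g₄,g₃}, {g₀,g₅}. -/
def adjE6 (i j : Fin 6) : Bool :=
  ((i.val, j.val) ∈ [(1,2),(2,1),(2,0),(0,2),(0,4),(4,0),(4,3),(3,4),(0,5),(5,0)])

noncomputable def refl6 (g : Fin 6) (x : Fin 6 → ℝ) : Fin 6 → ℝ :=
  fun g' => if g' = g then -x g + ∑ h ∈ Finset.univ.filter (fun h => adjE6 g h), x h else x g'

/-- Even Coxeter map: reflections at the even vertices g₂, g₄, g₅. -/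
noncomputable def cEven : (Fin 6 → ℝ) → (Fin 6 → ℝ) := refl6 2 ∘ refl6 4 ∘ refl6 5

/-- Odd Coxeter map: reflections at the odd vertices g₀, g₁, g₃. -/
noncomputable def cOdd : (Fin 6 → ℝ) → (Fin 6 → ℝ) := refl6 0 ∘ refl6 1 ∘ refl6 3

/-- The Coxeter transformation c = c∘ ∘ c•. -/
noncomputable def coxE6 : (Fin 6 → ℝ) → (Fin 6 → ℝ) := cEven ∘ cOdd

lemma cox0 (x : Fin 6 → ℝ) : coxE6 x 0 = -x 0 + x 2 + x 4 + x 5 := by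
  simp (config := { decide := true })
    [coxE6, cEven, cOdd, refl6, adjE6, Finset.sum_filter, Fin.sum_univ_six]; ring
lemma cox1 (x : Fin 6 → ℝ) : coxE6 x 1 = -x 1 + x 2 := by
  simp (config := { decide := true })
    [coxE6, cEven, cOdd, refl6, adjE6, Finset.sum_filter, Fin.sum_univ_six]
lemma cox2 (x : Fin 6 → ℝ) : coxE6 x 2 = -x 0 - x 1 + x 2 + x 4 + x 5 := by
  simp (config := { decide := true })
    [coxE6, cEven, cOdd, refl6, adjE6, Finset.sum_filter, Fin.sum_univ_six]; ring
lemma cox3 (x : Fin 6 → ℝ) : coxE6 x 3 = -x 3 + x 4 := by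
  simp (config := { decide := true })
    [coxE6, cEven, cOdd, refl6, adjE6, Finset.sum_filter, Fin.sum_univ_six]
lemma cox4 (x : Fin 6 → ℝ) : coxE6 x 4 = -x 0 + x 2 - x 3 + x 4 + x 5 := by
  simp (config := { decide := true })
    [coxE6, cEven, cOdd, refl6, adjE6, Finset.sum_filter, Fin.sum_univ_six]; ring
lemma cox5 (x : Fin 6 → ℝ) : coxE6 x 5 = -x 0 + x 2 + x 4 := by
  simp (config := { decide := true })
    [coxE6, cEven, cOdd, refl6, adjE6, Finset.sum_filter, Fin.sum_univ_six]; ring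

lemma fix_zero : ∀ x : Fin 6 → ℝ, coxE6 x = x → x = 0 := by
  intro x h
  have h0 := congrFun h 0; rw [cox0] at h0
  have h1 := congrFun h 1; rw [cox1] at h1
  have h2 := congrFun h 2; rw [cox2] at h2
  have h3 := congrFun h 3; rw [cox3] at h3
  have h4 := congrFun h 4; rw [cox4] at h4
  have h5 := congrFun h 5; rw [cox5] at h5
  funext i
  fin_cases i <;> simp <;> linarith

noncomputable def fLin : (Fin 6 → ℝ) →ₗ[ℝ] (Fin 6 → ℝ) where
  toFun x := coxE6 x - x
  map_add' x y := by
    funext i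
    fin_cases i <;>
      simp (config := { decide := true })
        [coxE6, cEven, cOdd, refl6, adjE6, Finset.sum_filter, Fin.sum_univ_six] <;> ring
  map_smul' c x := by
    funext i
    fin_cases i <;>
      simp (config := { decide := true })
        [coxE6, cEven, cOdd, refl6, adjE6, Finset.sum_filter, Fin.sum_univ_six, mul_add] <;> ring

theorem stmt_14 :
    (∀ x : Fin 6 → ℝ, coxE6 x = x → x = 0) ∧
      Function.Bijective (fun x : Fin 6 → ℝ => coxE6 x - x) := by
  refine ⟨fix_zero, ?_⟩
  have hf : (fun x : Fin 6 → ℝ => coxE6 x - x) = ⇑fLin := rfl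
  rw [hf]
  have hinj : Function.Injective fLin := by
    rw [← LinearMap.ker_eq_bot, LinearMap.ker_eq_bot']
    intro x hx
    apply fix_zero
    have hx' : coxE6 x - x = 0 := hx
    funext i
    have := congrFun hx' i
    simp only [Pi.sub_apply, Pi.zero_apply, sub_eq_zero] at this
    exact this
  exact ⟨hinj, (LinearMap.injective_iff_surjective).mp hinj⟩
end

section
/- Let P, Q, R be orthogonal projections on a complex Hilbert space H, and suppose the family {P, Q, R} is irreducible (the only closed subspaces invariant under all three are 0 and H) and that αP + βQ + δR = γ·I for positive reals α, β, δ, γ. Then dim H ≤ 2. -/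
/-! Writing `δ R = γ - α P - β Q`, the relation `R * R = R` says that the anticommutator
`P Q + Q P` is a linear combination of `1`, `P` and `Q`. Hence, for an eigenvector `v` of the
idempotent `P` (a nonzero vector of its kernel or of its range), the span of `v` and `Q v` is
invariant under `P`, `Q`, and therefore `R`. Being finite-dimensional it is closed, so by
irreducibility it is the whole space. -/

open Set Submodule

theorem anticomm_mem_span_of_isIdempotentElem {K A : Type*} [Field K] [Ring A] [Algebra K A]
    {p q r : A} (hp : IsIdempotentElem p) (hq : IsIdempotentElem q) (hr : IsIdempotentElem r)
    {α β δ γ : K} (hα : α ≠ 0) (hβ : β ≠ 0) (h : α • p + β • q + δ • r = γ • 1) :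
    p * q + q * p ∈ span K {1, p, q} := by
  have hδr : δ • r = γ • 1 - α • p - β • q := by rw [← h]; abel
  have hsq : (δ • r) * (δ • r) = δ • (δ • r) := by rw [smul_mul_smul_comm, hr.eq, smul_smul]
  rw [hδr] at hsq
  simp only [sub_mul, mul_sub, smul_mul_smul_comm, one_mul, mul_one, hp.eq, hq.eq] at hsq
  have hexp : (α * β) • (p * q + q * p) =
      (δ * γ - γ ^ 2) • 1 + (α * (2 * γ - α - δ)) • p + (β * (2 * γ - β - δ)) • q := by
    linear_combination (norm := module) hsq
  rw [← smul_mem_iff _ (mul_ne_zero hα hβ), hexp]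
  exact mem_span_triple.mpr ⟨_, _, _, rfl⟩

theorem Submodule.mapsTo_span_pair {R M : Type*} [Semiring R] [AddCommMonoid M] [Module R M]
    {f : Module.End R M} {v w : M} (hv : f v ∈ span R {v, w}) (hw : f w ∈ span R {v, w}) :
    MapsTo f (span R {v, w}) (span R {v, w}) :=
  fun _ hx ↦ span_le (p := (span R {v, w}).comap f)
    |>.mpr (insert_subset hv (singleton_subset_iff.mpr hw)) hx

section Field

variable {K V : Type*} [Field K] [AddCommGroup V] [Module K V]

theorem Module.rank_le_two_of_span_pair_eq_top {v w : V} (h : span K {v, w} = ⊤) :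
    Module.rank K V ≤ 2 := by
  rw [← rank_top, ← h]
  exact (rank_span_le _).trans (Cardinal.mk_insert_le.trans (by simp; norm_num))

theorem IsIdempotentElem.exists_apply_eq_smul [Nontrivial V] {p : Module.End K V}
    (hp : IsIdempotentElem p) : ∃ v ≠ 0, ∃ μ : K, p v = μ • v := by
  obtain ⟨x, hx⟩ := exists_ne (0 : V)
  by_cases hpx : p x = 0
  · exact ⟨x, hx, 0, by rw [hpx, zero_smul]⟩
  · exact ⟨p x, hpx, 1, by rw [one_smul, ← Module.End.mul_apply, hp.eq]⟩

theorem IsIdempotentElem.mapsTo_span_pair_apply {q : Module.End K V} (hq : IsIdempotentElem q)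
    (v : V) : MapsTo q (span K {v, q v}) (span K {v, q v}) := by
  refine mapsTo_span_pair (subset_span (by simp)) ?_
  rw [← Module.End.mul_apply, hq.eq]
  exact subset_span (by simp)

theorem mapsTo_span_pair_of_anticomm_mem_span {p q : Module.End K V}
    (hpq : p * q + q * p ∈ span K {1, p, q}) {v : V} {μ : K} (hv : p v = μ • v) :
    MapsTo p (span K {v, q v}) (span K {v, q v}) := by
  obtain ⟨a, b, c, habc⟩ := mem_span_triple.mp hpq
  have hpqv : p (q v) = (a + b * μ) • v + (c - μ) • q v := by
    have := LinearMap.congr_fun habc v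
    simp only [LinearMap.add_apply, LinearMap.smul_apply, Module.End.mul_apply,
      Module.End.one_apply, hv, map_smul] at this
    rw [add_smul, sub_smul, mul_smul, add_sub_assoc', this]
    abel
  refine mapsTo_span_pair ?_ ?_
  · rw [hv]; exact smul_mem _ _ (subset_span (by simp))
  · rw [hpqv]; exact mem_span_pair.mpr ⟨_, _, rfl⟩

theorem exists_ne_zero_forall_mapsTo_span_pair [Nontrivial V] {p q r : Module.End K V}
    (hp : IsIdempotentElem p) (hq : IsIdempotentElem q) (hr : IsIdempotentElem r)
    {α β δ γ : K} (hα : α ≠ 0) (hβ : β ≠ 0) (hδ : δ ≠ 0)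
    (h : α • p + β • q + δ • r = γ • 1) :
    ∃ v ≠ 0, ∀ f ∈ ({p, q, r} : Set (Module.End K V)),
      MapsTo f (span K {v, q v}) (span K {v, q v}) := by
  obtain ⟨v, hv, μ, hpv⟩ := hp.exists_apply_eq_smul
  have hpW := mapsTo_span_pair_of_anticomm_mem_span
    (anticomm_mem_span_of_isIdempotentElem hp hq hr hα hβ h) hpv
  have hqW := hq.mapsTo_span_pair_apply v
  have hr_eq : r = δ⁻¹ • (γ • 1 - α • p - β • q) := by
    rw [← h, eq_inv_smul_iff₀ hδ]; abel
  have hrW : r ∈ compatibleMaps (span K {v, q v}) (span K {v, q v}) := by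
    rw [hr_eq]
    exact smul_mem _ _ (sub_mem (sub_mem (smul_mem _ _ fun _ ↦ id) (smul_mem _ _ hpW))
      (smul_mem _ _ hqW))
  refine ⟨v, hv, ?_⟩
  rintro f (rfl | rfl | rfl)
  exacts [hpW, hqW, hrW]

end Field

theorem stmt_17_general {H : Type*} [NormedAddCommGroup H] [InnerProductSpace ℂ H]
    (P Q R : H →L[ℂ] H)
    (hP2 : P * P = P) (hQ2 : Q * Q = Q) (hR2 : R * R = R)
    (α β δ γ : ℝ) (hα : 0 < α) (hβ : 0 < β) (hδ : 0 < δ)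
    (heq : (α : ℂ) • P + (β : ℂ) • Q + (δ : ℂ) • R = (γ : ℂ) • (1 : H →L[ℂ] H))
    (hirr : ∀ W : Submodule ℂ H, IsClosed (W : Set H) →
      (∀ x ∈ W, P x ∈ W) → (∀ x ∈ W, Q x ∈ W) → (∀ x ∈ W, R x ∈ W) →
      W = ⊥ ∨ W = ⊤) :
    Module.rank ℂ H ≤ 2 := by
  rcases subsingleton_or_nontrivial H with hH | hH
  · rw [rank_subsingleton']
    exact zero_le
  have hidem {T : H →L[ℂ] H} (hT : T * T = T) : IsIdempotentElem (T : Module.End ℂ H) :=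
    congrArg ContinuousLinearMap.toLinearMap hT
  have heq' := congrArg ContinuousLinearMap.toLinearMap heq
  push_cast at heq'
  have hne {x : ℝ} (hx : 0 < x) : (x : ℂ) ≠ 0 := Complex.ofReal_ne_zero.mpr hx.ne'
  obtain ⟨v, hv, hW⟩ := exists_ne_zero_forall_mapsTo_span_pair (hidem hP2) (hidem hQ2)
    (hidem hR2) (hne hα) (hne hβ) (hne hδ) heq'
  have : FiniteDimensional ℂ (span ℂ {v, Q v}) := .span_of_finite ℂ (toFinite _)
  have hWtop := hirr _ (span ℂ {v, Q v}).closed_of_finiteDimensional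
    (hW _ (by simp)) (hW _ (by simp)) (hW _ (by simp))
  refine Module.rank_le_two_of_span_pair_eq_top (hWtop.resolve_left ?_)
  exact (Submodule.ne_bot_iff _).mpr ⟨v, subset_span (by simp), hv⟩

theorem stmt_17 {H : Type*} [NormedAddCommGroup H] [InnerProductSpace ℂ H] [CompleteSpace H]
    (P Q R : H →L[ℂ] H)
    (hP : IsSelfAdjoint P) (hP2 : P * P = P)
    (hQ : IsSelfAdjoint Q) (hQ2 : Q * Q = Q)
    (hR : IsSelfAdjoint R) (hR2 : R * R = R)
    (α β δ γ : ℝ) (hα : 0 < α) (hβ : 0 < β) (hδ : 0 < δ) (hγ : 0 < γ)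
    (heq : (α : ℂ) • P + (β : ℂ) • Q + (δ : ℂ) • R = (γ : ℂ) • (1 : H →L[ℂ] H))
    (hirr : ∀ W : Submodule ℂ H, IsClosed (W : Set H) →
      (∀ x ∈ W, P x ∈ W) → (∀ x ∈ W, Q x ∈ W) → (∀ x ∈ W, R x ∈ W) →
      W = ⊥ ∨ W = ⊤) :
    Module.rank ℂ H ≤ 2 :=
  stmt_17_general P Q R hP2 hQ2 hR2 α β δ γ hα hβ hδ heq hirr
end
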